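/- Let 0 < R < π and H > 0, and define f(θ₀) = 2π [ 1 − cos θ₀ + (R−θ₀)²(cos θ₀ − cos R)/((R−θ₀)² + H²) ] for θ₀ ∈ [0,R]. Then f attains its minimum on [0,R] at a unique point θ₀* ∈ (0,R), and θ₀* is the unique solution in (0,R) of the equation sin θ₀ (H² + (R−θ₀)²) = 2(R−θ₀)(cos θ₀ − cos R). -/

import Mathlib

open Real Filter Set

/-- Scale-invariant resistance of the radial frustum cone with base angular radius `R`,
truncation angle `θ₀` and height `H`, as a function of `θ₀`. -/
noncomputable def frustumRes1 (R H θ₀ : ℝ) : ℝ :=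
  2 * π * (1 - Real.cos θ₀ +
    (R - θ₀) ^ 2 * (Real.cos θ₀ - Real.cos R) / ((R - θ₀) ^ 2 + H ^ 2))

/-- auxiliary: derivative numerator -/
noncomputable def phiAux (R H θ : ℝ) : ℝ :=
  Real.sin θ * (H ^ 2 + (R - θ) ^ 2) - 2 * (R - θ) * (Real.cos θ - Real.cos R)

lemma phiAux_cont (R H : ℝ) : Continuous (phiAux R H) := by
  unfold phiAux; fun_prop

lemma phiAux_hasDeriv (R H θ : ℝ) :
    HasDerivAt (phiAux R H)
      (Real.cos θ * (H ^ 2 + (R - θ) ^ 2) + 2 * (Real.cos θ - Real.cos R)) θ := by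
  have h1 : HasDerivAt (fun x : ℝ => R - x) (-1) θ := (hasDerivAt_id θ).const_sub R
  have h2 := h1.pow 2
  have hsin := Real.hasDerivAt_sin θ
  have hcos := Real.hasDerivAt_cos θ
  have hterm1 := hsin.mul (h2.const_add (H ^ 2))
  have hterm2 := (h1.const_mul 2).mul (hcos.sub_const (Real.cos R))
  have h := hterm1.sub hterm2
  convert h using 1
  · rfl
  · rfl
  · funext x; simp only [phiAux, Pi.sub_apply, Pi.mul_apply, Pi.pow_apply]
  · norm_num
    ring

lemma phiAux_zero_neg (R H : ℝ) (hR0 : 0 < R) (hRpi : R < π) : phiAux R H 0 < 0 := by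
  have h1 : Real.cos R < 1 := by
    have := Real.cos_lt_cos_of_nonneg_of_le_pi le_rfl hRpi.le hR0
    simpa using this
  unfold phiAux
  simp only [Real.sin_zero, Real.cos_zero, sub_zero, zero_mul, zero_sub, neg_neg]
  nlinarith

lemma phiAux_R_pos (R H : ℝ) (hR0 : 0 < R) (hRpi : R < π) (hH : 0 < H) :
    0 < phiAux R H R := by
  have h1 : 0 < Real.sin R := Real.sin_pos_of_pos_of_lt_pi hR0 hRpi
  unfold phiAux
  simp only [sub_self]
  nlinarith [pow_pos hH 2]

/-- key sign fact: at any zero of `phiAux` in `(0,R)`, the derivative is positive. -/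
lemma phiAux_deriv_pos (R H : ℝ) (hRpi : R < π) (hH : 0 < H) {z : ℝ}
    (hz : z ∈ Set.Ioo 0 R) (h0 : phiAux R H z = 0) :
    0 < Real.cos z * (H ^ 2 + (R - z) ^ 2) + 2 * (Real.cos z - Real.cos R) := by
  obtain ⟨hz0, hzR⟩ := hz
  have hzpi : z < π := hzR.trans hRpi
  have hs : 0 < R - z := by linarith
  have hsinz : 0 < Real.sin z := Real.sin_pos_of_pos_of_lt_pi hz0 hzpi
  have hHs : 0 < H ^ 2 + (R - z) ^ 2 := by positivity
  have key : 0 < (R - z) * Real.cos z + Real.sin z := by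
    rcases le_or_gt 0 (Real.cos z) with hc | hc
    · nlinarith
    · -- z > π/2
      have hz2 : π / 2 < z := by
        by_contra h
        push_neg at h
        exact absurd (Real.cos_nonneg_of_mem_Icc ⟨by linarith, h⟩) (not_le.mpr hc)
      set u := π - z with hu
      have hu0 : 0 < u := by simp [hu]; linarith
      have hu2 : u < π / 2 := by simp [hu]; linarith
      have htan : u < Real.tan u := Real.lt_tan hu0 hu2
      have hcosu : 0 < Real.cos u := Real.cos_pos_of_mem_Ioo ⟨by linarith, hu2⟩
      have hsinu : u * Real.cos u < Real.sin u := by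
        have := (lt_div_iff₀ hcosu).mp (htan.trans_eq (Real.tan_eq_sin_div_cos u))
        linarith
      have hsz : Real.sin z = Real.sin u := by rw [hu, Real.sin_pi_sub]
      have hcz : Real.cos z = -Real.cos u := by rw [hu, Real.cos_pi_sub, neg_neg]
      have hlt : R - z < u := by simp [hu]; linarith
      have : (R - z) * Real.cos u < u * Real.cos u := by
        exact mul_lt_mul_of_pos_right hlt hcosu
      rw [hsz, hcz]
      nlinarith
  have heq : Real.sin z * (H ^ 2 + (R - z) ^ 2) =
      2 * (R - z) * (Real.cos z - Real.cos R) := by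
    unfold phiAux at h0; linarith
  have h6 : 0 < (Real.cos z * (H ^ 2 + (R - z) ^ 2) + 2 * (Real.cos z - Real.cos R)) * (R - z) := by
    nlinarith [mul_pos key hHs]
  nlinarith [h6, hs]

/-- crossing: at a zero in `(0,R)`, phiAux is positive just to the right,
negative just to the left. -/
lemma phiAux_crossing (R H : ℝ) (hRpi : R < π) (hH : 0 < H) {z : ℝ}
    (hz : z ∈ Set.Ioo 0 R) (h0 : phiAux R H z = 0) :
    ∃ δ > 0, (∀ x, z < x → x < z + δ → 0 < phiAux R H x) ∧
      (∀ x, z - δ < x → x < z → phiAux R H x < 0) := by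
  have hd := phiAux_hasDeriv R H z
  have hL := phiAux_deriv_pos R H hRpi hH hz h0
  have hslope := hasDerivAt_iff_tendsto_slope.mp hd
  have hev : ∀ᶠ x in nhdsWithin z {z}ᶜ, 0 < slope (phiAux R H) z x :=
    hslope.eventually (eventually_gt_nhds hL)
  rw [eventually_nhdsWithin_iff] at hev
  rw [Metric.eventually_nhds_iff] at hev
  obtain ⟨δ, hδ, hδ2⟩ := hev
  refine ⟨δ, hδ, ?_, ?_⟩
  · intro x hx1 hx2
    have hne : x ∈ ({z}ᶜ : Set ℝ) := by simp; exact ne_of_gt hx1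
    have hd : dist x z < δ := by rw [Real.dist_eq]; rw [abs_lt]; constructor <;> linarith
    have hsl := hδ2 hd hne
    rw [slope_def_field, h0, sub_zero] at hsl
    rcases div_pos_iff.mp hsl with ⟨h, _⟩ | ⟨_, h⟩
    · exact h
    · linarith
  · intro x hx1 hx2
    have hne : x ∈ ({z}ᶜ : Set ℝ) := by simp; exact ne_of_lt hx2
    have hd : dist x z < δ := by rw [Real.dist_eq]; rw [abs_lt]; constructor <;> linarith
    have hsl := hδ2 hd hne
    rw [slope_def_field, h0, sub_zero] at hsl
    rcases div_pos_iff.mp hsl with ⟨_, h⟩ | ⟨h, _⟩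
    · linarith
    · exact h

/-- phiAux is positive strictly to the right of any zero in `(0,R)`. -/
lemma phiAux_pos_after (R H : ℝ) (hR0 : 0 < R) (hRpi : R < π) (hH : 0 < H) {z : ℝ}
    (hz : z ∈ Set.Ioo 0 R) (h0 : phiAux R H z = 0) :
    ∀ w, z < w → w ≤ R → 0 < phiAux R H w := by
  by_contra hcon
  push_neg at hcon
  obtain ⟨w, hw1, hw2, hw3⟩ := hcon
  obtain ⟨δ, hδ, hpos, _⟩ := phiAux_crossing R H hRpi hH hz h0
  set δ' := min δ (w - z) with hδ'
  have hδ'0 : 0 < δ' := lt_min hδ (by linarith)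
  have hδ'le : δ' ≤ w - z := min_le_right _ _
  have hδ'le2 : δ' ≤ δ := min_le_left _ _
  -- φ > 0 on (z, z + δ']
  have hposloc : ∀ x, z < x → x ≤ z + δ'/2 → 0 < phiAux R H x := by
    intro x h1 h2
    exact hpos x h1 (by linarith)
  set T := {x : ℝ | x ∈ Set.Icc (z + δ'/2) w ∧ phiAux R H x ≤ 0} with hT
  have hTne : T.Nonempty := ⟨w, ⟨⟨by linarith, le_rfl⟩, hw3⟩⟩
  have hTclosed : IsClosed T := by
    have : T = Set.Icc (z + δ'/2) w ∩ phiAux R H ⁻¹' Set.Iic 0 := by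
      ext x; simp [hT, Set.mem_Icc]
    rw [this]
    exact isClosed_Icc.inter (isClosed_Iic.preimage (phiAux_cont R H))
  have hTbdd : BddBelow T := ⟨z + δ'/2, fun x hx => hx.1.1⟩
  set m := sInf T with hm
  have hmT : m ∈ T := hTclosed.csInf_mem hTne hTbdd
  obtain ⟨⟨hm1, hm2⟩, hm3⟩ := hmT
  have hmpos : ∀ x, z < x → x < m → 0 < phiAux R H x := by
    intro x h1 h2
    rcases le_or_gt x (z + δ'/2) with h | h
    · exact hposloc x h1 h
    · by_contra hneg
      push_neg at hneg
      have : x ∈ T := ⟨⟨h.le, by linarith⟩, hneg⟩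
      exact absurd (csInf_le hTbdd this) (not_le.mpr h2)
  -- m must be a zero
  have hmz : phiAux R H m = 0 := by
    rcases lt_trichotomy (phiAux R H m) 0 with h | h | h
    · -- IVT between z+δ'/2 and m gives a zero in (z+δ'/2, m), contradiction
      have hle : z + δ'/2 ≤ m := hm1
      have hlt : z + δ'/2 < m := by
        rcases eq_or_lt_of_le hle with he | hl
        · exfalso; have := hposloc m (by linarith) (le_of_eq he.symm); linarith
        · exact hl
      have hIVT := intermediate_value_Ioo' hlt.le ((phiAux_cont R H).continuousOn)
      have h0mem : (0:ℝ) ∈ Set.Ioo (phiAux R H m) (phiAux R H (z + δ'/2)) :=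
        ⟨h, hposloc (z + δ'/2) (by linarith) le_rfl⟩
      obtain ⟨c, hc1, hc2⟩ := hIVT h0mem
      exfalso
      have := hmpos c (by linarith [hc1.1]) hc1.2
      linarith [hc2]
    · exact h
    · linarith
  -- m is a zero in (0,R): crossing at m gives negativity just left of m, contradiction
  have hmIoo : m ∈ Set.Ioo 0 R := by
    constructor
    · have : (0:ℝ) < z := hz.1; linarith
    · rcases eq_or_lt_of_le (hm2.trans hw2) with he | hl
      · exfalso
        have := phiAux_R_pos R H hR0 hRpi hH
        rw [he] at hmz; linarith
      · exact hl
  obtain ⟨δ₂, hδ₂, _, hneg₂⟩ := phiAux_crossing R H hRpi hH hmIoo hmz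
  have hzm : z < m := by linarith
  have hmin0 : 0 < min δ₂ (m - z) := lt_min hδ₂ (by linarith : (0:ℝ) < m - z)
  have hminr : min δ₂ (m - z) ≤ m - z := min_le_right _ _
  have hminl : min δ₂ (m - z) ≤ δ₂ := min_le_left _ _
  set x := m - min δ₂ (m - z) / 2 with hx
  have hx1 : z < x := by rw [hx]; linarith
  have hx2 : x < m := by rw [hx]; linarith
  have hneg := hneg₂ x (by rw [hx]; linarith) hx2
  exact absurd (hmpos x hx1 hx2) (not_lt.mpr hneg.le)

/-- phiAux is negative strictly to the left of any zero in `(0,R)`. -/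
lemma phiAux_neg_before (R H : ℝ) (hR0 : 0 < R) (hRpi : R < π) (hH : 0 < H) {z : ℝ}
    (hz : z ∈ Set.Ioo 0 R) (h0 : phiAux R H z = 0) :
    ∀ w, 0 ≤ w → w < z → phiAux R H w < 0 := by
  by_contra hcon
  push_neg at hcon
  obtain ⟨w, hw1, hw2, hw3⟩ := hcon
  obtain ⟨δ, hδ, _, hneg⟩ := phiAux_crossing R H hRpi hH hz h0
  set δ' := min δ (z - w) with hδ'
  have hδ'0 : 0 < δ' := lt_min hδ (by linarith)
  have hδ'le : δ' ≤ z - w := min_le_right _ _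
  have hδ'le2 : δ' ≤ δ := min_le_left _ _
  -- φ < 0 on [z - δ'/2, z)
  have hnegloc : ∀ x, z - δ'/2 ≤ x → x < z → phiAux R H x < 0 := by
    intro x h1 h2
    exact hneg x (by linarith) h2
  set T := {x : ℝ | x ∈ Set.Icc w (z - δ'/2) ∧ 0 ≤ phiAux R H x} with hT
  have hTne : T.Nonempty := ⟨w, ⟨⟨le_rfl, by linarith⟩, hw3⟩⟩
  have hTclosed : IsClosed T := by
    have : T = Set.Icc w (z - δ'/2) ∩ phiAux R H ⁻¹' Set.Ici 0 := by
      ext x; simp [hT, Set.mem_Icc]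
    rw [this]
    exact isClosed_Icc.inter (isClosed_Ici.preimage (phiAux_cont R H))
  have hTbdd : BddAbove T := ⟨z - δ'/2, fun x hx => hx.1.2⟩
  set m := sSup T with hm
  have hmT : m ∈ T := hTclosed.csSup_mem hTne hTbdd
  obtain ⟨⟨hm1, hm2⟩, hm3⟩ := hmT
  have hmneg : ∀ x, m < x → x < z → phiAux R H x < 0 := by
    intro x h1 h2
    rcases le_or_gt (z - δ'/2) x with h | h
    · exact hnegloc x h h2
    · by_contra hnn
      push_neg at hnn
      have : x ∈ T := ⟨⟨by linarith [hm1], h.le⟩, hnn⟩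
      exact absurd (le_csSup hTbdd this) (not_le.mpr h1)
  have hmz : phiAux R H m = 0 := by
    rcases lt_trichotomy (phiAux R H m) 0 with h | h | h
    · linarith
    · exact h
    · -- IVT between m and z - δ'/4 gives a zero in between, contradiction
      have hlt : m < z - δ'/4 := by
        rcases eq_or_lt_of_le hm2 with he | hl
        · exfalso; have := hnegloc m (le_of_eq he.symm) (by linarith); linarith
        · linarith
      have hIVT := intermediate_value_Ioo' hlt.le ((phiAux_cont R H).continuousOn)
      have h0mem : (0:ℝ) ∈ Set.Ioo (phiAux R H (z - δ'/4)) (phiAux R H m) :=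
        ⟨hnegloc (z - δ'/4) (by linarith) (by linarith), h⟩
      obtain ⟨c, hc1, hc2⟩ := hIVT h0mem
      exfalso
      have := hmneg c hc1.1 (by linarith [hc1.2])
      linarith [hc2]
  have hmIoo : m ∈ Set.Ioo 0 R := by
    constructor
    · rcases eq_or_lt_of_le hw1 with he | hl
      · rcases eq_or_lt_of_le hm1 with he2 | hl2
        · exfalso
          have := phiAux_zero_neg R H hR0 hRpi
          rw [← he2, ← he] at hmz
          linarith
        · linarith
      · linarith
    · have : m < z := by linarith
      linarith [hz.2]
  obtain ⟨δ₂, hδ₂, hpos₂, _⟩ := phiAux_crossing R H hRpi hH hmIoo hmz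
  have hmz' : m < z := by linarith
  have hmin0 : 0 < min δ₂ (z - m) := lt_min hδ₂ (by linarith : (0:ℝ) < z - m)
  have hminr : min δ₂ (z - m) ≤ z - m := min_le_right _ _
  have hminl : min δ₂ (z - m) ≤ δ₂ := min_le_left _ _
  set x := m + min δ₂ (z - m) / 2 with hx
  have hx1 : m < x := by rw [hx]; linarith
  have hx2 : x < z := by rw [hx]; linarith
  have hposx := hpos₂ x hx1 (by rw [hx]; linarith)
  exact absurd (hmneg x hx1 hx2) (not_lt.mpr hposx.le)

lemma frustum_cont (R H : ℝ) (hH : 0 < H) : Continuous (frustumRes1 R H) := by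
  unfold frustumRes1
  apply Continuous.mul continuous_const
  apply Continuous.add (by fun_prop)
  exact Continuous.div (by fun_prop) (by fun_prop)
    (fun x => by positivity)

lemma frustum_hasDeriv (R H θ : ℝ) (hH : 0 < H) :
    HasDerivAt (frustumRes1 R H)
      (2 * π * H ^ 2 * phiAux R H θ / ((R - θ) ^ 2 + H ^ 2) ^ 2) θ := by
  have hDne : ((R - θ) ^ 2 + H ^ 2) ≠ 0 := by positivity
  have h1 : HasDerivAt (fun x : ℝ => R - x) (-1) θ := (hasDerivAt_id θ).const_sub R
  have h2 := h1.pow 2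
  have hcos := Real.hasDerivAt_cos θ
  have hN := h2.mul (hcos.sub_const (Real.cos R))
  have hD := h2.add_const (H ^ 2)
  have hq := hN.div hD hDne
  have hinner := ((hasDerivAt_const θ (1:ℝ)).sub hcos).add hq
  have hf := hinner.const_mul (2 * π)
  convert hf using 1
  · rfl
  · rfl
  · funext x; simp only [frustumRes1, Pi.sub_apply, Pi.add_apply, Pi.mul_apply, Pi.div_apply, Pi.pow_apply]
  unfold phiAux
  norm_num
  field_simp
  ring

/-- `f(θ₀) = frustumRes1 R H θ₀` attains its minimum on `[0,R]` at a unique point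
`θ₀* ∈ (0,R)`, which is the unique solution in `(0,R)` of
`sin θ₀ (H² + (R−θ₀)²) = 2(R−θ₀)(cos θ₀ − cos R)`. -/
theorem stmt_8 (R H : ℝ) (hR0 : 0 < R) (hRpi : R < π) (hH : 0 < H) :
    ∃ θs ∈ Set.Ioo 0 R,
      (∀ θ ∈ Set.Icc 0 R, θ ≠ θs → frustumRes1 R H θs < frustumRes1 R H θ) ∧
      Real.sin θs * (H ^ 2 + (R - θs) ^ 2) =
        2 * (R - θs) * (Real.cos θs - Real.cos R) ∧
      ∀ θ ∈ Set.Ioo 0 R,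
        Real.sin θ * (H ^ 2 + (R - θ) ^ 2) =
          2 * (R - θ) * (Real.cos θ - Real.cos R) → θ = θs := by
  -- existence of a zero of phiAux by IVT
  have hIVT := intermediate_value_Ioo hR0.le ((phiAux_cont R H).continuousOn)
  have h0mem : (0:ℝ) ∈ Set.Ioo (phiAux R H 0) (phiAux R H R) :=
    ⟨phiAux_zero_neg R H hR0 hRpi, phiAux_R_pos R H hR0 hRpi hH⟩
  obtain ⟨θs, hθs, hz⟩ := hIVT h0mem
  refine ⟨θs, hθs, ?_, ?_, ?_⟩
  · -- strict global minimum
    intro θ hθ hne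
    have hanti : StrictAntiOn (frustumRes1 R H) (Set.Icc 0 θs) := by
      apply strictAntiOn_of_deriv_neg (convex_Icc _ _)
        ((frustum_cont R H hH).continuousOn)
      intro x hx
      rw [interior_Icc] at hx
      rw [(frustum_hasDeriv R H x hH).deriv]
      apply div_neg_of_neg_of_pos
      · have hφ : phiAux R H x < 0 :=
          phiAux_neg_before R H hR0 hRpi hH hθs hz x hx.1.le hx.2
        have : (0:ℝ) < 2 * π * H ^ 2 := by positivity
        nlinarith
      · positivity
    have hmono : StrictMonoOn (frustumRes1 R H) (Set.Icc θs R) := by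
      apply strictMonoOn_of_deriv_pos (convex_Icc _ _)
        ((frustum_cont R H hH).continuousOn)
      intro x hx
      rw [interior_Icc] at hx
      rw [(frustum_hasDeriv R H x hH).deriv]
      apply div_pos
      · have hφ : 0 < phiAux R H x :=
          phiAux_pos_after R H hR0 hRpi hH hθs hz x hx.1 hx.2.le
        have : (0:ℝ) < 2 * π * H ^ 2 := by positivity
        nlinarith
      · positivity
    rcases lt_or_gt_of_ne hne with hlt | hgt
    · exact hanti ⟨hθ.1, hlt.le⟩ ⟨hθs.1.le, le_rfl⟩ hlt
    · exact hmono ⟨le_rfl, hθs.2.le⟩ ⟨hgt.le, hθ.2⟩ hgt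
  · -- θs satisfies the equation
    unfold phiAux at hz; linarith
  · -- uniqueness
    intro θ hθ heq
    have hzθ : phiAux R H θ = 0 := by unfold phiAux; linarith
    by_contra hne
    rcases lt_or_gt_of_ne hne with hlt | hgt
    · have := phiAux_neg_before R H hR0 hRpi hH hθs hz θ hθ.1.le hlt
      linarith
    · have := phiAux_pos_after R H hR0 hRpi hH hθs hz θ hgt hθ.2.le
      linarith
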